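/- The sequence (g'_n)_{n ≥ 0}, where g'_n = g_n mod 2, equals the unique fixed point of the substitution u defined by u(0) = 01, u(1) = 0010, beginning with 0; that is, for every m, the word g'_0 g'_1 ⋯ g'_{|u^m(0)|−1} equals u^m(0). -/
import Mathlib


/-- The substitution `u` with `u(0) = 01` and `u(1) = 0010`. -/
def usub : ℕ → List ℕ
  | 0 => [0, 1]
  | 1 => [0, 0, 1, 0]
  | _ => []

/-- `u` extended to words by concatenation. -/
def uapp (w : List ℕ) : List ℕ := w.flatMap usub

/-- Start position of the `k`-th block of the fixed point. -/
def pb (g : ℕ → ℕ) (k : ℕ) : ℕ := 2 * (k + g k / 2)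

/-- The block structure invariant at block `k`. -/
def Blk (g : ℕ → ℕ) (k : ℕ) : Prop :=
  if g k % 2 = 0 then
    g (pb g k) = 2 * k ∧ g (pb g k + 1) = 2 * k + 1 ∧ pb g (k + 1) = pb g k + 2
  else
    g (pb g k) = 2 * k ∧ g (pb g k + 1) = 2 * k ∧ g (pb g k + 2) = 2 * k + 1 ∧
      g (pb g k + 3) = 2 * k + 2 ∧ pb g (k + 1) = pb g k + 4

section Main

variable {g : ℕ → ℕ}

lemma pb_ge (k : ℕ) : 2 * k ≤ pb g k := by unfold pb; omega

lemma gsmall (hg0 : g 0 = 0) (hg : ∀ n : ℕ, 1 ≤ n → g n = n - g (g (n - 1) / 2)) :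
    g 1 = 1 ∧ g 2 = 2 ∧ g 3 = 2 ∧ g 4 = 3 ∧ g 5 = 4 ∧ g 6 = 4 ∧ g 7 = 5 := by
  have h1 : g 1 = 1 := by have h := hg 1 (by norm_num); simpa [hg0] using h
  have h2 : g 2 = 2 := by have h := hg 2 (by norm_num); simpa [hg0, h1] using h
  have h3 : g 3 = 2 := by have h := hg 3 (by norm_num); simpa [hg0, h1, h2] using h
  have h4 : g 4 = 3 := by have h := hg 4 (by norm_num); simpa [hg0, h1, h2, h3] using h
  have h5 : g 5 = 4 := by have h := hg 5 (by norm_num); simpa [hg0, h1, h2, h3, h4] using h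
  have h6 : g 6 = 4 := by have h := hg 6 (by norm_num); simpa [hg0, h1, h2, h3, h4, h5] using h
  have h7 : g 7 = 5 := by have h := hg 7 (by norm_num); simpa [hg0, h1, h2, h3, h4, h5, h6] using h
  exact ⟨h1, h2, h3, h4, h5, h6, h7⟩

lemma blk_base (hg0 : g 0 = 0) (hg : ∀ n : ℕ, 1 ≤ n → g n = n - g (g (n - 1) / 2)) :
    Blk g 0 ∧ Blk g 1 ∧ Blk g 2 := by
  obtain ⟨h1, h2, h3, h4, h5, h6, h7⟩ := gsmall hg0 hg
  refine ⟨?_, ?_, ?_⟩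
  · unfold Blk pb; simp [hg0, h1]
  · unfold Blk pb; simp [hg0, h1, h2, h3, h4, h5]
  · unfold Blk pb; simp [hg0, h1, h2, h3, h6, h7]


lemma blk_step (hg : ∀ n : ℕ, 1 ≤ n → g n = n - g (g (n - 1) / 2))
    (j : ℕ) (hprev : Blk g j)
    (hA0 : g j % 2 = 0 → g j = 2 * (g (j + 1) / 2))
    (hA1 : g j % 2 = 1 → g (j + 1) % 2 = 0)
    (hB : g (j + 2) / 2 = g (j + 1) / 2 + g (j + 1) % 2) :
    Blk g (j + 1) := by
  have hpj : pb g j = 2 * (j + g j / 2) := rfl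
  have hpj1 : pb g (j + 1) = 2 * ((j + 1) + g (j + 1) / 2) := rfl
  have hpj2 : pb g (j + 1 + 1) = 2 * ((j + 2) + g (j + 2) / 2) := rfl
  by_cases hs : g j % 2 = 0
  · rw [Blk, if_pos hs] at hprev
    obtain ⟨e1, e2, e3⟩ := hprev
    have hq := hA0 hs
    set P := pb g j with hP
    -- F1 : value at start of block j+1
    have hF1 : g (pb g (j + 1)) = 2 * (j + 1) := by
      have h := hg (pb g (j + 1)) (by omega)
      rw [e3] at h ⊢
      rw [show P + 2 - 1 = P + 1 by omega, e2, show (2 * j + 1) / 2 = j by omega] at h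
      omega
    have hF2 : g (pb g (j + 1) + 1) = 2 * (j + 1) + 1 - g (j + 1) % 2 := by
      have h := hg (pb g (j + 1) + 1) (by omega)
      rw [show pb g (j+1) + 1 - 1 = pb g (j+1) by omega, hF1,
        show 2 * (j + 1) / 2 = j + 1 by omega] at h
      omega
    by_cases hr : g (j + 1) % 2 = 0
    · rw [Blk, if_pos hr]
      refine ⟨hF1, by omega, by omega⟩
    · rw [Blk, if_neg hr]
      have hr1 : g (j + 1) % 2 = 1 := by omega
      have hF3 : g (pb g (j + 1) + 2) = 2 * (j + 1) + 1 := by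
        have h := hg (pb g (j + 1) + 2) (by omega)
        rw [show pb g (j+1) + 2 - 1 = pb g (j+1) + 1 by omega, hF2, hr1,
          show 2 * (j + 1) + 1 - 1 = 2 * (j+1) by omega,
          show 2 * (j + 1) / 2 = j + 1 by omega] at h
        omega
      have hF4 : g (pb g (j + 1) + 3) = 2 * (j + 1) + 2 := by
        have h := hg (pb g (j + 1) + 3) (by omega)
        rw [show pb g (j+1) + 3 - 1 = pb g (j+1) + 2 by omega, hF3,
          show (2 * (j + 1) + 1) / 2 = j + 1 by omega] at h
        omega
      exact ⟨hF1, by omega, hF3, hF4, by omega⟩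
  · rw [Blk, if_neg hs] at hprev
    obtain ⟨e1, e2, e3, e4, e5⟩ := hprev
    have hr : g (j + 1) % 2 = 0 := hA1 (by omega)
    set P := pb g j with hP
    have hF1 : g (pb g (j + 1)) = 2 * (j + 1) := by
      have h := hg (pb g (j + 1)) (by omega)
      rw [e5] at h ⊢
      rw [show P + 4 - 1 = P + 3 by omega, e4, show (2 * j + 2) / 2 = j + 1 by omega] at h
      omega
    have hF2 : g (pb g (j + 1) + 1) = 2 * (j + 1) + 1 := by
      have h := hg (pb g (j + 1) + 1) (by omega)
      rw [show pb g (j+1) + 1 - 1 = pb g (j+1) by omega, hF1,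
        show 2 * (j + 1) / 2 = j + 1 by omega] at h
      omega
    rw [Blk, if_pos hr]
    exact ⟨hF1, hF2, by omega⟩


/-- First value of any block. -/
lemma blk_first (h : Blk g k) : g (pb g k) = 2 * k := by
  unfold Blk at h; split at h <;> exact h.1

/-- Value just before the start of block `i+1`. -/
lemma blk_last (h : Blk g i) :
    g (pb g (i + 1) - 1) = 2 * i + 1 + g i % 2 := by
  unfold Blk at h
  split at h
  · obtain ⟨e1, e2, e3⟩ := h
    rw [e3, show pb g i + 2 - 1 = pb g i + 1 by omega, e2]; omega
  · obtain ⟨e1, e2, e3, e4, e5⟩ := h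
    rw [e5, show pb g i + 4 - 1 = pb g i + 3 by omega, e4]; omega

lemma facts_at (k i : ℕ) (hm1 : Blk g i) (h0 : Blk g (i + 1)) (h1 : Blk g (i + 1 + 1))
    (hlo : pb g (i + 1) ≤ k) (hhi : k < pb g (i + 1 + 1)) :
    (g (k - 1) % 2 = 0 → g (k - 1) = 2 * (g k / 2)) ∧
    (g (k - 1) % 2 = 1 → g k % 2 = 0) ∧
    g (k + 1) / 2 = g k / 2 + g k % 2 := by
  have hpos : 1 ≤ pb g (i + 1) := by unfold pb; omega
  have hlast := blk_last hm1
  have hfirst2 := blk_first h1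
  by_cases hs : g (i + 1) % 2 = 0
  · rw [Blk, if_pos hs] at h0
    obtain ⟨e1, e2, e3⟩ := h0
    have hk : k = pb g (i + 1) ∨ k = pb g (i + 1) + 1 := by omega
    rcases hk with hk | hk
    · have v2 : g k = 2 * (i + 1) := by rw [hk]; exact e1
      have v1 : g (k - 1) = 2 * i + 1 + g i % 2 := by rw [hk]; exact hlast
      have v3 : g (k + 1) = 2 * (i + 1) + 1 := by rw [hk]; exact e2
      omega
    · have v2 : g k = 2 * (i + 1) + 1 := by rw [hk]; exact e2
      have v1 : g (k - 1) = 2 * (i + 1) := by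
        rw [hk, show pb g (i+1) + 1 - 1 = pb g (i+1) by omega]; exact e1
      have v3 : g (k + 1) = 2 * (i + 1 + 1) := by
        rw [hk, show pb g (i+1) + 1 + 1 = pb g (i+1) + 2 by omega, ← e3]; exact hfirst2
      omega
  · rw [Blk, if_neg hs] at h0
    obtain ⟨e1, e2, e3, e4, e5⟩ := h0
    have hk : k = pb g (i + 1) ∨ k = pb g (i + 1) + 1 ∨ k = pb g (i + 1) + 2 ∨
        k = pb g (i + 1) + 3 := by omega
    rcases hk with hk | hk | hk | hk
    · have v2 : g k = 2 * (i + 1) := by rw [hk]; exact e1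
      have v1 : g (k - 1) = 2 * i + 1 + g i % 2 := by rw [hk]; exact hlast
      have v3 : g (k + 1) = 2 * (i + 1) := by rw [hk]; exact e2
      omega
    · have v2 : g k = 2 * (i + 1) := by rw [hk]; exact e2
      have v1 : g (k - 1) = 2 * (i + 1) := by
        rw [hk, show pb g (i+1) + 1 - 1 = pb g (i+1) by omega]; exact e1
      have v3 : g (k + 1) = 2 * (i + 1) + 1 := by
        rw [hk, show pb g (i+1) + 1 + 1 = pb g (i+1) + 2 by omega]; exact e3
      omega
    · have v2 : g k = 2 * (i + 1) + 1 := by rw [hk]; exact e3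
      have v1 : g (k - 1) = 2 * (i + 1) := by
        rw [hk, show pb g (i+1) + 2 - 1 = pb g (i+1) + 1 by omega]; exact e2
      have v3 : g (k + 1) = 2 * (i + 1) + 2 := by
        rw [hk, show pb g (i+1) + 2 + 1 = pb g (i+1) + 3 by omega]; exact e4
      omega
    · have v2 : g k = 2 * (i + 1) + 2 := by rw [hk]; exact e4
      have v1 : g (k - 1) = 2 * (i + 1) + 1 := by
        rw [hk, show pb g (i+1) + 3 - 1 = pb g (i+1) + 2 by omega]; exact e3
      have v3 : g (k + 1) = 2 * (i + 1 + 1) := by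
        rw [hk, show pb g (i+1) + 3 + 1 = pb g (i+1) + 4 by omega, ← e5]; exact hfirst2
      omega

lemma cover (hg0 : g 0 = 0) (hg1 : g 1 = 1) :
    ∀ K, (∀ j, j < K → Blk g j) → ∀ m, 2 ≤ m → m < pb g K →
      ∃ j, 1 ≤ j ∧ pb g j ≤ m ∧ m < pb g (j + 1) := by
  intro K
  induction K with
  | zero => intro _ m hm hlt; exfalso; unfold pb at hlt; rw [hg0] at hlt; omega
  | succ K ih =>
    intro hB m hm hlt
    by_cases h : m < pb g K
    · exact ih (fun j hj => hB j (by omega)) m hm h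
    · have hK : 1 ≤ K := by
        by_contra hc
        have : K = 0 := by omega
        subst this
        unfold pb at hlt
        rw [hg1] at hlt; omega
      exact ⟨K, hK, by omega, hlt⟩

lemma all_blk (hg0 : g 0 = 0) (hg : ∀ n : ℕ, 1 ≤ n → g n = n - g (g (n - 1) / 2)) :
    ∀ k, Blk g k := by
  have base := blk_base hg0 hg
  have hg1 : g 1 = 1 := (gsmall hg0 hg).1
  intro k
  induction k using Nat.strong_induction_on with
  | _ k IH =>
    match k with
    | 0 => exact base.1
    | 1 => exact base.2.1
    | 2 => exact base.2.2
    | (n + 3) =>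
      obtain ⟨j, hj1, hlo, hhi⟩ := cover hg0 hg1 (n + 3) (fun j hj => IH j hj)
        (n + 3) (by omega) (by have := pb_ge (g := g) (n + 3); omega)
      have h2j : 2 * j ≤ pb g j := pb_ge j
      have hjlt : j + 1 < n + 3 := by omega
      obtain ⟨i, rfl⟩ : ∃ i, j = i + 1 := ⟨j - 1, by omega⟩
      have hf := facts_at (n + 3) i (IH i (by omega)) (IH (i + 1) (by omega))
        (IH (i + 1 + 1) (by omega)) hlo hhi
      exact blk_step hg (n + 2) (IH (n + 2) (by omega)) hf.1 hf.2.1 hf.2.2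

lemma prefix_lemma (hg0 : g 0 = 0) (hAll : ∀ k, Blk g k) :
    ∀ K, (List.range (pb g K)).map (fun n => g n % 2)
      = uapp ((List.range K).map (fun n => g n % 2)) := by
  intro K
  induction K with
  | zero =>
    have : pb g 0 = 0 := by unfold pb; omega
    simp [this, uapp]
  | succ K ih =>
    have h := hAll K
    rw [List.range_succ, List.map_append, uapp, List.flatMap_append]
    rw [show ((List.range K).map (fun n => g n % 2)).flatMap usub
        = uapp ((List.range K).map (fun n => g n % 2)) from rfl, ← ih]
    by_cases hs : g K % 2 = 0
    · rw [Blk, if_pos hs] at h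
      obtain ⟨e1, e2, e3⟩ := h
      rw [e3, show pb g K + 2 = (pb g K + 1) + 1 from rfl, List.range_succ,
        List.range_succ, List.map_append, List.map_append]
      simp [e1, e2, hs, usub, Nat.mul_mod_right]
    · rw [Blk, if_neg hs] at h
      obtain ⟨e1, e2, e3, e4, e5⟩ := h
      have hs1 : g K % 2 = 1 := by omega
      rw [e5, show pb g K + 4 = (((pb g K + 1) + 1) + 1) + 1 from rfl, List.range_succ,
        List.range_succ, List.range_succ, List.range_succ,
        List.map_append, List.map_append, List.map_append, List.map_append]
      simp [e1, e2, e3, e4, hs1, usub, Nat.mul_mod_right]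

end Main

/-- The sequence `g'_n = g_n mod 2` is the fixed point of `u: 0 ↦ 01, 1 ↦ 0010`
beginning with `0`: for every `m`, the word `g'_0 g'_1 ⋯ g'_{|u^m(0)|−1}`
equals `u^m(0)`. -/
theorem gmod2_fixed_point (g : ℕ → ℕ)
    (hg0 : g 0 = 0) (hg : ∀ n : ℕ, 1 ≤ n → g n = n - g (g (n - 1) / 2)) :
    ∀ m : ℕ, (List.range (uapp^[m] [0]).length).map (fun n => g n % 2)
      = uapp^[m] [0] := by
  have hAll := all_blk hg0 hg
  intro m
  induction m with
  | zero => simp [show List.range 1 = [0] from rfl, hg0]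
  | succ m ih =>
    rw [Function.iterate_succ_apply']
    have hW : uapp (uapp^[m] [0])
        = (List.range (pb g (uapp^[m] [0]).length)).map (fun n => g n % 2) := by
      rw [prefix_lemma hg0 hAll, ih]
    rw [hW]
    simp
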